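/- arXiv:0901.0696 — 2 statements merged into one kernel-verified Lean document; each statement's English description precedes it below -/
import Mathlib

section
/- For every n ≥ 2, the probability p_n that two independently and uniformly chosen phylogenetic trees of size n are isomorphic (after removing labels) equals (n!/(2n-3)!!)² · Σ_{t ∈ U_n} (1/4)^{sym(t)}. -/
open scoped Classical

/-- Plane binary trees: every node has outdegree 0 or 2. -/
inductive BT where
  | leaf : BT
  | node : BT → BT → BT

/-- Isomorphism of rooted binary trees with *unordered* children. -/
inductive Iso : BT → BT → Prop
  | leaf : Iso .leaf .leaf
  | node {a b c d} : Iso a c → Iso b d → Iso (.node a b) (.node c d)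
  | swap {a b c d} : Iso a d → Iso b c → Iso (.node a b) (.node c d)

theorem Iso.rfl : ∀ t, Iso t t
  | .leaf => .leaf
  | .node l r => .node (Iso.rfl l) (Iso.rfl r)

theorem Iso.symm' {a b : BT} (h : Iso a b) : Iso b a := by
  induction h with
  | leaf => exact .leaf
  | node h1 h2 ih1 ih2 => exact .node ih1 ih2
  | swap h1 h2 ih1 ih2 => exact .swap ih2 ih1

theorem Iso.trans' : ∀ {a b c : BT}, Iso a b → Iso b c → Iso a c := by
  intro a b c h1
  induction h1 generalizing c with
  | leaf => exact fun h2 => h2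
  | node g1 g2 ih1 ih2 =>
      intro h2
      cases h2 with
      | node k1 k2 => exact .node (ih1 k1) (ih2 k2)
      | swap k1 k2 => exact .swap (ih1 k1) (ih2 k2)
  | swap g1 g2 ih1 ih2 =>
      intro h2
      cases h2 with
      | node k1 k2 => exact .swap (ih1 k2) (ih2 k1)
      | swap k1 k2 => exact .node (ih1 k2) (ih2 k1)

instance btSetoid : Setoid BT :=
  ⟨Iso, ⟨Iso.rfl, Iso.symm', Iso.trans'⟩⟩

/-- Otter trees: isomorphism classes of unordered rooted binary trees. -/
def Otter : Type := Quotient btSetoid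

/-- Number of leaves. -/
def leavesBT : BT → ℕ
  | .leaf => 1
  | .node l r => leavesBT l + leavesBT r

/-- Number of internal (binary) nodes. -/
def internalsBT : BT → ℕ
  | .leaf => 0
  | .node l r => internalsBT l + internalsBT r + 1

/-- Number of symmetrical nodes: internal nodes whose two subtrees are isomorphic. -/
noncomputable def symBT : BT → ℕ
  | .leaf => 0
  | .node l r => symBT l + symBT r + (if Iso l r then 1 else 0)

theorem leaves_iso {a b : BT} (h : Iso a b) : leavesBT a = leavesBT b := by
  induction h with
  | leaf => rfl
  | node h1 h2 ih1 ih2 => simp [leavesBT, ih1, ih2]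
  | swap h1 h2 ih1 ih2 => simp [leavesBT, ih1, ih2]; omega

theorem internals_iso {a b : BT} (h : Iso a b) : internalsBT a = internalsBT b := by
  induction h with
  | leaf => rfl
  | node h1 h2 ih1 ih2 => simp [internalsBT, ih1, ih2]
  | swap h1 h2 ih1 ih2 => simp [internalsBT, ih1, ih2]; omega

theorem sym_iso {a b : BT} (h : Iso a b) : symBT a = symBT b := by
  induction h with
  | leaf => rfl
  | @node a b c d h1 h2 ih1 ih2 =>
      have hiff : Iso a b ↔ Iso c d :=
        ⟨fun hab => (h1.symm'.trans' hab).trans' h2,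
         fun hcd => (h1.trans' hcd).trans' h2.symm'⟩
      simp only [symBT, ih1, ih2, if_congr hiff rfl rfl]
  | @swap a b c d h1 h2 ih1 ih2 =>
      have hiff : Iso a b ↔ Iso c d :=
        ⟨fun hab => (h2.symm'.trans' hab.symm').trans' h1,
         fun hcd => (h1.trans' hcd.symm').trans' h2.symm'⟩
      simp only [symBT, ih1, ih2, if_congr hiff rfl rfl]
      omega

def Otter.leaves : Otter → ℕ := Quotient.lift leavesBT fun _ _ h => leaves_iso h
def Otter.internals : Otter → ℕ := Quotient.lift internalsBT fun _ _ h => internals_iso h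
noncomputable def Otter.sym : Otter → ℕ := Quotient.lift symBT fun _ _ h => sym_iso h

/-- The set (as a type) of Otter trees with `n` leaves. -/
def OtterN (n : ℕ) : Type := {q : Otter // q.leaves = n}

/-- Wedderburn–Etherington numbers: number of Otter trees with `n` leaves. -/
noncomputable def WE (n : ℕ) : ℕ := Nat.card (OtterN n)

/-- Binary trees with labeled leaves. -/
inductive LBT where
  | leaf : ℕ → LBT
  | node : LBT → LBT → LBT

/-- Label-preserving isomorphism with unordered children. -/
inductive LIso : LBT → LBT → Prop
  | leaf (k : ℕ) : LIso (.leaf k) (.leaf k)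
  | node {a b c d} : LIso a c → LIso b d → LIso (.node a b) (.node c d)
  | swap {a b c d} : LIso a d → LIso b c → LIso (.node a b) (.node c d)

theorem LIso.rfl : ∀ t, LIso t t
  | .leaf k => .leaf k
  | .node l r => .node (LIso.rfl l) (LIso.rfl r)

theorem LIso.symm' {a b : LBT} (h : LIso a b) : LIso b a := by
  induction h with
  | leaf k => exact .leaf k
  | node h1 h2 ih1 ih2 => exact .node ih1 ih2
  | swap h1 h2 ih1 ih2 => exact .swap ih2 ih1

theorem LIso.trans' : ∀ {a b c : LBT}, LIso a b → LIso b c → LIso a c := by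
  intro a b c h1
  induction h1 generalizing c with
  | leaf k => exact fun h2 => h2
  | node g1 g2 ih1 ih2 =>
      intro h2
      cases h2 with
      | node k1 k2 => exact .node (ih1 k1) (ih2 k2)
      | swap k1 k2 => exact .swap (ih1 k1) (ih2 k2)
  | swap g1 g2 ih1 ih2 =>
      intro h2
      cases h2 with
      | node k1 k2 => exact .swap (ih1 k2) (ih2 k1)
      | swap k1 k2 => exact .node (ih1 k2) (ih2 k1)

instance ltSetoid : Setoid LBT :=
  ⟨LIso, ⟨LIso.rfl, LIso.symm', LIso.trans'⟩⟩

/-- Labeled (phylogenetic-type) trees up to label-preserving isomorphism. -/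
def LTree : Type := Quotient ltSetoid

/-- The multiset of leaf labels. -/
def labelsLT : LBT → Multiset ℕ
  | .leaf k => {k}
  | .node l r => labelsLT l + labelsLT r

/-- The underlying unlabeled shape of a labeled tree. -/
def shapeLT : LBT → BT
  | .leaf _ => .leaf
  | .node l r => .node (shapeLT l) (shapeLT r)

theorem labels_iso {a b : LBT} (h : LIso a b) : labelsLT a = labelsLT b := by
  induction h with
  | leaf k => rfl
  | node h1 h2 ih1 ih2 => simp [labelsLT, ih1, ih2]
  | swap h1 h2 ih1 ih2 => simp [labelsLT, ih1, ih2]; exact add_comm _ _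

theorem shape_iso {a b : LBT} (h : LIso a b) : Iso (shapeLT a) (shapeLT b) := by
  induction h with
  | leaf k => exact .leaf
  | node h1 h2 ih1 ih2 => exact .node ih1 ih2
  | swap h1 h2 ih1 ih2 => exact .swap ih1 ih2

def LTree.labels : LTree → Multiset ℕ := Quotient.lift labelsLT fun _ _ h => labels_iso h

def LTree.shape : LTree → Otter :=
  Quotient.lift (fun t => (⟦shapeLT t⟧ : Otter)) fun _ _ h => Quotient.sound (shape_iso h)

/-- Phylogenetic trees of size `n`: labeled trees whose leaf labels are exactly `1, …, n`. -/
def Phylo (n : ℕ) : Type := {q : LTree // q.labels = (Finset.Icc 1 n).val}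

/-- The number of phylogenetic trees of size `n`. -/
noncomputable def phyloCount (n : ℕ) : ℕ := Nat.card (Phylo n)

/-- The double factorial `n!! = n·(n-2)·(n-4)···`. -/
def doubleFac : ℕ → ℕ
  | 0 => 1
  | 1 => 1
  | (n+2) => (n+2) * doubleFac n

/-- The probability that two independent uniformly random phylogenetic trees of
size `n` are isomorphic (have the same shape). -/
noncomputable def pIso (n : ℕ) : ℚ :=
  (Nat.card {pp : Phylo n × Phylo n // pp.1.1.shape = pp.2.1.shape} : ℚ)
    / (Nat.card (Phylo n) : ℚ) ^ 2

/-!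
Fix a linear order on plane trees and put the smaller subtree on the left: this picks a canonical
plane representative for every Otter tree. Ordering labeled trees by their canonical shape first
does the same for phylogenetic trees, compatibly with taking shapes. Splitting a canonical
labeling of `t = node a b` at the root gives a set of `|a|` labels and canonical labelings of `a`
and `b`, each labeling counted twice when `a = b`; by induction `t` has `n! / 2^{sym t}`
labelings. Summing their squares counts isomorphic pairs, and summing them counts all trees: the
same root split shows that `H_n = ∑_t 2^{-sym t}` satisfies `2 H_n = ∑_k H_k H_{n-k}`, so
`H_n = C_{n-1} / 2^{n-1}` and `n! H_n = (2n-3)!!`.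
-/

open scoped Nat

theorem Finset.two_nsmul_sum_filter_le {α M : Type*} [LinearOrder α] [AddCommMonoid M]
    {P : Finset (α × α)} (hP : ∀ p ∈ P, p.swap ∈ P) {w : α × α → M} (hw : ∀ p, w p.swap = w p) :
    2 • ∑ p ∈ P with p.1 ≤ p.2, w p = ∑ p ∈ P, w p + ∑ p ∈ P with p.1 = p.2, w p := by
  have hgt : ∑ p ∈ P with p.2 < p.1, w p = ∑ p ∈ P with p.1 < p.2, w p :=
    Finset.sum_nbij' Prod.swap Prod.swap (by simp +contextual [hP]) (by simp +contextual [hP])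
      (by simp) (by simp) (fun p _ => (hw p).symm)
  have hsum : ∑ p ∈ P, w p = ∑ p ∈ P with p.1 < p.2, w p + ∑ p ∈ P with p.2 < p.1, w p
      + ∑ p ∈ P with p.1 = p.2, w p := by
    simp only [Finset.sum_filter, ← Finset.sum_add_distrib]
    refine Finset.sum_congr rfl fun p _ => ?_
    rcases lt_trichotomy p.1 p.2 with h | h | h
    · simp [h, h.ne, h.not_gt]
    · simp [h]
    · simp [h, h.ne', h.not_gt]
  have hle : ∑ p ∈ P with p.1 ≤ p.2, w p
      = ∑ p ∈ P with p.1 < p.2, w p + ∑ p ∈ P with p.1 = p.2, w p := by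
    simp only [Finset.sum_filter, ← Finset.sum_add_distrib]
    refine Finset.sum_congr rfl fun p _ => ?_
    rcases lt_trichotomy p.1 p.2 with h | h | h
    · simp [h.le, h, h.ne]
    · simp [h]
    · simp [h.not_ge, h.not_gt, h.ne']
  rw [hle, hsum, hgt, two_nsmul]
  abel

theorem Nat.card_eq_sum_card_fiber {α β : Type*} [Fintype β] (f : α → β)
    [∀ b, Finite {a // f a = b}] : Nat.card α = ∑ b, Nat.card {a // f a = b} := by
  rw [← Nat.card_congr (Equiv.sigmaFiberEquiv f), Nat.card_sigma]

theorem Nat.card_fiber_pairs_eq_sum_sq {α β : Type*} [Fintype β] (f : α → β)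
    [∀ b, Finite {a // f a = b}] :
    Nat.card {p : α × α // f p.1 = f p.2} = ∑ b, Nat.card {a // f a = b} ^ 2 := by
  let e : {p : α × α // f p.1 = f p.2} ≃ Σ b, {a // f a = b} × {a // f a = b} :=
    { toFun := fun p => ⟨f p.1.1, ⟨p.1.1, rfl⟩, ⟨p.1.2, p.2.symm⟩⟩
      invFun := fun x => ⟨(x.2.1.1, x.2.2.1), x.2.1.2.trans x.2.2.2.symm⟩
      left_inv := fun _ => rfl
      right_inv := by rintro ⟨b, ⟨x, rfl⟩, y⟩; rfl }
  simp only [Nat.card_congr e, Nat.card_sigma, Nat.card_prod, sq]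

namespace BT

def code : BT → ℕ
  | leaf => 0
  | node l r => Nat.pair (code l) (code r) + 1

theorem code_injective : Function.Injective code := by
  intro a b h
  induction a generalizing b with
  | leaf => cases b <;> simp_all [code]
  | node l r ihl ihr =>
    cases b with
    | leaf => simp [code] at h
    | node l' r' =>
      simp only [code, Nat.add_right_cancel_iff, Nat.pair_eq_pair] at h
      rw [ihl h.1, ihr h.2]

instance : LinearOrder BT := LinearOrder.lift' code code_injective

def canon : BT → BT
  | leaf => leaf
  | node l r => node (min (canon l) (canon r)) (max (canon l) (canon r))

theorem iso_canon (t : BT) : Iso t (canon t) := by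
  induction t with
  | leaf => exact .leaf
  | node l r ihl ihr =>
    rcases le_total (canon l) (canon r) with h | h
    · simpa [canon, h] using Iso.node ihl ihr
    · simpa [canon, h] using Iso.swap ihl ihr

theorem canon_eq_of_iso {a b : BT} (h : Iso a b) : canon a = canon b := by
  induction h with
  | leaf => rfl
  | node _ _ ih1 ih2 => simp only [canon, ih1, ih2]
  | swap _ _ ih1 ih2 => simp only [canon, ih1, ih2, min_comm, max_comm]

theorem iso_iff_canon_eq {a b : BT} : Iso a b ↔ canon a = canon b :=
  ⟨canon_eq_of_iso, fun h => (iso_canon a).trans' (h ▸ (iso_canon b).symm')⟩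

theorem canon_canon (t : BT) : canon (canon t) = canon t :=
  (canon_eq_of_iso (iso_canon t)).symm

theorem iso_iff_eq_of_canon {a b : BT} (ha : canon a = a) (hb : canon b = b) : Iso a b ↔ a = b := by
  rw [iso_iff_canon_eq, ha, hb]

theorem canon_node_eq_self_iff {a b : BT} :
    canon (node a b) = node a b ↔ canon a = a ∧ canon b = b ∧ a ≤ b := by
  simp only [canon, node.injEq]
  constructor
  · rintro ⟨hmin, hmax⟩
    have hcanon : ∀ x, x = canon a ∨ x = canon b → canon x = x := by
      rintro x (rfl | rfl) <;> exact canon_canon _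
    refine ⟨?_, ?_, ?_⟩
    · rw [← hmin]; exact hcanon _ (min_choice _ _)
    · rw [← hmax]; exact hcanon _ (max_choice _ _)
    · exact hmin.symm.trans_le (min_le_max.trans_eq hmax)
  · rintro ⟨ha, hb, hab⟩
    simp [ha, hb, hab]

end BT

namespace LBT

def code : LBT → ℕ
  | leaf k => 2 * k
  | node l r => 2 * Nat.pair (code l) (code r) + 1

theorem code_injective : Function.Injective code := by
  intro a b h
  induction a generalizing b with
  | leaf j => cases b <;> simp only [code] at h <;> grind
  | node l r ihl ihr =>
    cases b with
    | leaf => simp only [code] at h; omega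
    | node l' r' =>
      have h' : Nat.pair (code l) (code r) = Nat.pair (code l') (code r') := by
        simp only [code] at h; omega
      rw [Nat.pair_eq_pair] at h'
      rw [ihl h'.1, ihr h'.2]

/-- Labeled trees are ordered by the canonical form of their shape first, so that
canonicalizing a labeled tree canonicalizes its shape (`shape_canon`). -/
def key (t : LBT) : BT ×ₗ ℕ := toLex (BT.canon (shapeLT t), code t)

theorem key_injective : Function.Injective key :=
  fun _ _ h => code_injective (congrArg (fun x => (ofLex x).2) h)

instance : LinearOrder LBT := LinearOrder.lift' key key_injective

theorem monotone_canon_shape : Monotone fun t => BT.canon (shapeLT t) :=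
  fun _ _ h => Prod.Lex.monotone_fst (key _) (key _) h

theorem lt_of_canon_shape_lt {x y : LBT} (h : BT.canon (shapeLT x) < BT.canon (shapeLT y)) :
    x < y :=
  Prod.Lex.lt_iff.mpr (.inl h)

def canon : LBT → LBT
  | leaf k => leaf k
  | node l r => node (min (canon l) (canon r)) (max (canon l) (canon r))

theorem liso_canon (t : LBT) : LIso t (canon t) := by
  induction t with
  | leaf k => exact .leaf k
  | node l r ihl ihr =>
    rcases le_total (canon l) (canon r) with h | h
    · simpa [canon, h] using LIso.node ihl ihr
    · simpa [canon, h] using LIso.swap ihl ihr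

theorem canon_eq_of_liso {a b : LBT} (h : LIso a b) : canon a = canon b := by
  induction h with
  | leaf => rfl
  | node _ _ ih1 ih2 => simp only [canon, ih1, ih2]
  | swap _ _ ih1 ih2 => simp only [canon, ih1, ih2, min_comm, max_comm]

theorem canon_canon (t : LBT) : canon (canon t) = canon t :=
  (canon_eq_of_liso (liso_canon t)).symm

theorem labels_canon (t : LBT) : labelsLT (canon t) = labelsLT t :=
  (labels_iso (liso_canon t)).symm

theorem shape_canon (t : LBT) : shapeLT (canon t) = BT.canon (shapeLT t) := by
  induction t with
  | leaf k => rfl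
  | node l r ihl ihr =>
    have hshape : ∀ x, x = canon l ∨ x = canon r → shapeLT x = BT.canon (shapeLT x) := by
      rintro x (rfl | rfl)
      · rw [ihl, BT.canon_canon]
      · rw [ihr, BT.canon_canon]
    rw [canon, shapeLT, shapeLT, BT.canon, hshape _ (min_choice _ _), hshape _ (max_choice _ _),
      monotone_canon_shape.map_min, monotone_canon_shape.map_max, ← hshape _ (.inl rfl),
      ← hshape _ (.inr rfl), ihl, ihr]

theorem canon_node_eq_self_iff {a b : LBT} :
    canon (node a b) = node a b ↔ canon a = a ∧ canon b = b ∧ a ≤ b := by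
  simp only [canon, node.injEq]
  constructor
  · rintro ⟨hmin, hmax⟩
    have hcanon : ∀ x, x = canon a ∨ x = canon b → canon x = x := by
      rintro x (rfl | rfl) <;> exact canon_canon _
    refine ⟨?_, ?_, ?_⟩
    · rw [← hmin]; exact hcanon _ (min_choice _ _)
    · rw [← hmax]; exact hcanon _ (max_choice _ _)
    · exact hmin.symm.trans_le (min_le_max.trans_eq hmax)
  · rintro ⟨ha, hb, hab⟩
    simp [ha, hb, hab]

end LBT

theorem one_le_leavesBT (t : BT) : 1 ≤ leavesBT t := by
  induction t with
  | leaf => exact le_rfl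
  | node l r ihl ihr => simp only [leavesBT]; omega

theorem internalsBT_add_one (t : BT) : internalsBT t + 1 = leavesBT t := by
  induction t with
  | leaf => rfl
  | node l r ihl ihr => simp only [internalsBT, leavesBT]; omega

theorem card_labelsLT (t : LBT) : Multiset.card (labelsLT t) = leavesBT (shapeLT t) := by
  induction t with
  | leaf k => rfl
  | node l r ihl ihr => simp [labelsLT, shapeLT, leavesBT, ihl, ihr]

namespace BT

def upTo : ℕ → Finset BT
  | 0 => {leaf}
  | k + 1 => insert leaf ((upTo k ×ˢ upTo k).image fun p => node p.1 p.2)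

theorem mem_upTo {t : BT} {k : ℕ} (h : internalsBT t ≤ k) : t ∈ upTo k := by
  induction t generalizing k with
  | leaf => cases k <;> simp [upTo]
  | node l r ihl ihr =>
    obtain ⟨k, rfl⟩ : ∃ j, k = j + 1 := ⟨k - 1, by simp only [internalsBT] at h; omega⟩
    simp only [internalsBT] at h
    simp only [upTo, Finset.mem_insert, Finset.mem_image, Finset.mem_product]
    exact .inr ⟨(l, r), ⟨ihl (by omega), ihr (by omega)⟩, rfl⟩

end BT

def shapes (n : ℕ) : Finset BT :=
  (BT.upTo n).filter fun s => s.canon = s ∧ leavesBT s = n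

theorem mem_shapes {s : BT} {n : ℕ} : s ∈ shapes n ↔ s.canon = s ∧ leavesBT s = n := by
  refine ⟨fun h => (Finset.mem_filter.mp h).2, fun h => Finset.mem_filter.mpr ⟨?_, h⟩⟩
  exact BT.mem_upTo (by have := internalsBT_add_one s; omega)

def labelings : BT → Finset ℕ → Finset LBT
  | .leaf, S => S.image .leaf
  | .node a b, S => (labelings a S ×ˢ labelings b S).image fun p => .node p.1 p.2

theorem mem_labelings {t : LBT} {S : Finset ℕ} (h : ∀ k ∈ labelsLT t, k ∈ S) :
    t ∈ labelings (shapeLT t) S := by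
  induction t with
  | leaf k => simpa [labelings, labelsLT, shapeLT] using h
  | node l r ihl ihr =>
    simp only [labelsLT, Multiset.mem_add] at h
    simp only [shapeLT, labelings, Finset.mem_image, Finset.mem_product]
    exact ⟨(l, r), ⟨ihl fun k hk => h k (.inl hk), ihr fun k hk => h k (.inr hk)⟩, rfl⟩

def fiber (s : BT) (S : Finset ℕ) : Finset LBT :=
  (labelings s S).filter fun t => t.canon = t ∧ shapeLT t = s ∧ labelsLT t = S.val

theorem mem_fiber {t : LBT} {s : BT} {S : Finset ℕ} :
    t ∈ fiber s S ↔ t.canon = t ∧ shapeLT t = s ∧ labelsLT t = S.val := by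
  refine ⟨fun h => (Finset.mem_filter.mp h).2, fun h => Finset.mem_filter.mpr ⟨?_, h⟩⟩
  rw [← h.2.1]
  exact mem_labelings fun k hk => by rwa [h.2.2] at hk

def splits (a b : BT) (S : Finset ℕ) : Finset (LBT × LBT) :=
  (S.powersetCard (leavesBT a)).biUnion fun A => fiber a A ×ˢ fiber b (S \ A)

theorem mem_splits {a b : BT} {S : Finset ℕ} {x y : LBT} :
    (x, y) ∈ splits a b S ↔ x.canon = x ∧ y.canon = y ∧ shapeLT x = a ∧ shapeLT y = b ∧
      labelsLT x + labelsLT y = S.val := by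
  simp only [splits, Finset.mem_biUnion, Finset.mem_product, Finset.mem_powersetCard, mem_fiber]
  constructor
  · rintro ⟨A, ⟨hAS, -⟩, ⟨hx, rfl, hxA⟩, ⟨hy, rfl, hyA⟩⟩
    refine ⟨hx, hy, rfl, rfl, ?_⟩
    rw [hxA, hyA, Finset.sdiff_val, add_tsub_cancel_of_le (Finset.val_le_iff.mpr hAS)]
  · rintro ⟨hx, hy, rfl, rfl, hS⟩
    have hnodup : (labelsLT x).Nodup :=
      Multiset.nodup_of_le (Multiset.le_add_right _ _) (hS ▸ S.nodup)
    let A : Finset ℕ := ⟨labelsLT x, hnodup⟩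
    have hAS : A.val ≤ S.val := hS ▸ Multiset.le_add_right _ _
    refine ⟨A, ⟨Finset.val_le_iff.mp hAS, card_labelsLT x⟩, ⟨hx, rfl, rfl⟩, ⟨hy, rfl, ?_⟩⟩
    rw [Finset.sdiff_val, ← hS, add_tsub_cancel_left]

theorem card_splits_mul {a b : BT} {S : Finset ℕ} (hS : S.card = leavesBT a + leavesBT b)
    (ha : ∀ A : Finset ℕ, A.card = leavesBT a → (fiber a A).card * 2 ^ symBT a = (leavesBT a)!)
    (hb : ∀ B : Finset ℕ, B.card = leavesBT b → (fiber b B).card * 2 ^ symBT b = (leavesBT b)!) :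
    (splits a b S).card * (2 ^ symBT a * 2 ^ symBT b) = (leavesBT a + leavesBT b)! := by
  have hdisj : (S.powersetCard (leavesBT a) : Set (Finset ℕ)).PairwiseDisjoint
      fun A => fiber a A ×ˢ fiber b (S \ A) := by
    intro A _ B _ hAB
    simp only [Function.onFun, Finset.disjoint_left, Finset.mem_product, mem_fiber]
    rintro p ⟨⟨-, -, hA⟩, -⟩ ⟨⟨-, -, hB⟩, -⟩
    exact hAB (Finset.val_injective (hA.symm.trans hB))
  calc (splits a b S).card * (2 ^ symBT a * 2 ^ symBT b)
      = ∑ A ∈ S.powersetCard (leavesBT a),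
          ((fiber a A).card * 2 ^ symBT a) * ((fiber b (S \ A)).card * 2 ^ symBT b) := by
        rw [splits, Finset.card_biUnion hdisj, Finset.sum_mul]
        exact Finset.sum_congr rfl fun A _ => by rw [Finset.card_product]; ring
    _ = ∑ A ∈ S.powersetCard (leavesBT a), (leavesBT a)! * (leavesBT b)! := by
        refine Finset.sum_congr rfl fun A hA => ?_
        obtain ⟨hAS, hAcard⟩ := Finset.mem_powersetCard.mp hA
        rw [ha A hAcard, hb _ (by rw [Finset.card_sdiff_of_subset hAS, hS, hAcard]; omega)]
    _ = (leavesBT a + leavesBT b)! := by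
        rw [Finset.sum_const, Finset.card_powersetCard, hS, smul_eq_mul, ← mul_assoc,
          Nat.choose_symm_add, Nat.add_choose_mul_factorial_mul_factorial]

theorem fiber_node (a b : BT) (S : Finset ℕ) :
    fiber (.node a b) S = ((splits a b S).filter fun p => p.1 ≤ p.2).image
      fun p => .node p.1 p.2 := by
  ext t
  simp only [Finset.mem_image, Finset.mem_filter, mem_fiber, Prod.exists]
  constructor
  · rintro ⟨ht, hshape, hlabels⟩
    cases t with
    | leaf k => simp [shapeLT] at hshape
    | node x y =>
      obtain ⟨hx, hy, hxy⟩ := LBT.canon_node_eq_self_iff.mp ht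
      simp only [shapeLT, BT.node.injEq] at hshape
      exact ⟨x, y, ⟨mem_splits.mpr ⟨hx, hy, hshape.1, hshape.2, hlabels⟩, hxy⟩, rfl⟩
  · rintro ⟨x, y, ⟨hxy, hle⟩, rfl⟩
    obtain ⟨hx, hy, rfl, rfl, hS⟩ := mem_splits.mp hxy
    exact ⟨LBT.canon_node_eq_self_iff.mpr ⟨hx, hy, hle⟩, rfl, hS⟩

theorem filter_splits_of_lt {a b : BT} (ha : a.canon = a) (hb : b.canon = b) (hab : a < b)
    (S : Finset ℕ) : (splits a b S).filter (fun p => p.1 ≤ p.2) = splits a b S := by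
  refine Finset.filter_true_of_mem fun ⟨x, y⟩ hxy => le_of_lt ?_
  obtain ⟨-, -, rfl, rfl, -⟩ := mem_splits.mp hxy
  exact LBT.lt_of_canon_shape_lt (by rwa [ha, hb])

theorem card_splits_self (a : BT) (S : Finset ℕ) :
    (splits a a S).card = 2 * ((splits a a S).filter fun p => p.1 ≤ p.2).card := by
  have hswap : ∀ p ∈ splits a a S, p.swap ∈ splits a a S := by
    rintro ⟨x, y⟩ h
    obtain ⟨hx, hy, hxa, hya, hS⟩ := mem_splits.mp h
    exact mem_splits.mpr ⟨hy, hx, hya, hxa, by rwa [add_comm]⟩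
  -- the two subtrees carry disjoint, nonempty label sets
  have hdiag : ∀ p ∈ splits a a S, p.1 ≠ p.2 := by
    rintro ⟨x, y⟩ h (rfl : x = y)
    obtain ⟨-, -, -, -, hS⟩ := mem_splits.mp h
    have hempty : labelsLT x = 0 := disjoint_self.mp (Multiset.nodup_add.mp (hS ▸ S.nodup)).2.2
    have hcard := card_labelsLT x
    rw [hempty, Multiset.card_zero] at hcard
    exact (one_le_leavesBT (shapeLT x)).not_gt (by omega)
  have h := Finset.two_nsmul_sum_filter_le hswap (w := fun _ => 1) fun _ => rfl
  rw [Finset.filter_false_of_mem hdiag, Finset.sum_empty, add_zero] at h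
  simpa using h.symm

theorem symBT_node_of_canon {a b : BT} (ha : a.canon = a) (hb : b.canon = b) :
    symBT (.node a b) = symBT a + symBT b + if a = b then 1 else 0 := by
  simp only [symBT, BT.iso_iff_eq_of_canon ha hb]

theorem card_fiber_node_mul {a b : BT} (hab : (BT.node a b).canon = .node a b) (S : Finset ℕ) :
    (fiber (.node a b) S).card * 2 ^ symBT (.node a b)
      = (splits a b S).card * (2 ^ symBT a * 2 ^ symBT b) := by
  obtain ⟨ha, hb, hle⟩ := BT.canon_node_eq_self_iff.mp hab
  rw [fiber_node, Finset.card_image_of_injective _ fun p q h => by simpa [Prod.ext_iff] using h,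
    symBT_node_of_canon ha hb]
  rcases hle.lt_or_eq with hlt | rfl
  · rw [filter_splits_of_lt ha hb hlt, if_neg hlt.ne, add_zero, pow_add]
  · rw [if_pos rfl, card_splits_self, pow_succ]
    ring

theorem card_fiber_mul (s : BT) (hs : s.canon = s) (S : Finset ℕ) (hS : S.card = leavesBT s) :
    (fiber s S).card * 2 ^ symBT s = (leavesBT s)! := by
  induction s generalizing S with
  | leaf =>
    obtain ⟨k, rfl⟩ := Finset.card_eq_one.mp hS
    suffices fiber .leaf {k} = {.leaf k} by simp [this, symBT, leavesBT]
    ext t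
    cases t <;> simp [mem_fiber, LBT.canon, shapeLT, labelsLT, eq_comm]
  | node a b iha ihb =>
    obtain ⟨ha, hb, -⟩ := BT.canon_node_eq_self_iff.mp hs
    rw [card_fiber_node_mul hs, card_splits_mul hS (iha ha) (ihb hb)]
    rfl

section Catalan

open Finset.HasAntidiagonal

def shapePairs (m : ℕ) : Finset (BT × BT) :=
  (antidiagonal m).biUnion fun ij => shapes (ij.1 + 1) ×ˢ shapes (ij.2 + 1)

theorem mem_shapePairs {m : ℕ} {x y : BT} :
    (x, y) ∈ shapePairs m ↔ x.canon = x ∧ y.canon = y ∧ leavesBT x + leavesBT y = m + 2 := by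
  simp only [shapePairs, Finset.mem_biUnion, Finset.mem_product, mem_antidiagonal,
    mem_shapes, Prod.exists]
  constructor
  · rintro ⟨i, j, hij, ⟨hx, hxl⟩, ⟨hy, hyl⟩⟩
    exact ⟨hx, hy, by omega⟩
  · rintro ⟨hx, hy, hl⟩
    have := one_le_leavesBT x
    have := one_le_leavesBT y
    exact ⟨leavesBT x - 1, leavesBT y - 1, by omega, ⟨hx, by omega⟩, ⟨hy, by omega⟩⟩

theorem shapes_add_two (m : ℕ) :
    shapes (m + 2) = ((shapePairs m).filter fun p => p.1 ≤ p.2).image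
      fun p => .node p.1 p.2 := by
  ext s
  simp only [Finset.mem_image, Finset.mem_filter, mem_shapes, Prod.exists]
  constructor
  · rintro ⟨hs, hl⟩
    cases s with
    | leaf => simp [leavesBT] at hl
    | node x y =>
      obtain ⟨hx, hy, hxy⟩ := BT.canon_node_eq_self_iff.mp hs
      exact ⟨x, y, ⟨mem_shapePairs.mpr ⟨hx, hy, hl⟩, hxy⟩, rfl⟩
  · rintro ⟨x, y, ⟨hxy, hle⟩, rfl⟩
    obtain ⟨hx, hy, hl⟩ := mem_shapePairs.mp hxy
    exact ⟨BT.canon_node_eq_self_iff.mpr ⟨hx, hy, hle⟩, hl⟩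

theorem shapes_zero : shapes 0 = ∅ :=
  Finset.eq_empty_of_forall_notMem fun s hs => by
    have := one_le_leavesBT s
    rw [(mem_shapes.mp hs).2] at this
    omega

theorem shapes_one : shapes 1 = {.leaf} := by
  ext s
  cases s with
  | leaf => simp [mem_shapes, BT.canon, leavesBT]
  | node l r =>
    have := one_le_leavesBT l
    have := one_le_leavesBT r
    simp only [mem_shapes, leavesBT, Finset.mem_singleton, reduceCtorEq, iff_false]
    omega

/-- `symWeight n = ∑_{t ∈ U_n} 2^{-sym t}`, computed on canonical shapes. -/
noncomputable def symWeight (n : ℕ) : ℚ := ∑ s ∈ shapes n, ((2 : ℚ) ^ symBT s)⁻¹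

theorem symBT_node_comm (a b : BT) : symBT (.node a b) = symBT (.node b a) := by
  simp only [symBT, add_comm (symBT a), (⟨Iso.symm', Iso.symm'⟩ : Iso a b ↔ Iso b a)]

theorem two_mul_symWeight_add_two (m : ℕ) :
    2 * symWeight (m + 2) =
      ∑ ij ∈ antidiagonal m, symWeight (ij.1 + 1) * symWeight (ij.2 + 1) := by
  set w : BT × BT → ℚ := fun p => ((2 : ℚ) ^ symBT (.node p.1 p.2))⁻¹
  have hswap : ∀ p ∈ shapePairs m, p.swap ∈ shapePairs m := by
    rintro ⟨x, y⟩ h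
    obtain ⟨hx, hy, hl⟩ := mem_shapePairs.mp h
    exact mem_shapePairs.mpr ⟨hy, hx, by rw [add_comm, hl]⟩
  -- a symmetric root doubles the weight of its pair
  have hdiag : ∀ p ∈ shapePairs m, w p + (if p.1 = p.2 then w p else 0)
      = ((2 : ℚ) ^ symBT p.1)⁻¹ * ((2 : ℚ) ^ symBT p.2)⁻¹ := by
    rintro ⟨x, y⟩ h
    obtain ⟨hx, hy, -⟩ := mem_shapePairs.mp h
    simp only [w, symBT_node_of_canon hx hy]
    split_ifs <;> simp [pow_add] <;> ring
  have hdisj : (antidiagonal m : Set (ℕ × ℕ)).PairwiseDisjoint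
      fun ij => shapes (ij.1 + 1) ×ˢ shapes (ij.2 + 1) := by
    intro ij hij kl hkl hne
    simp only [Function.onFun, Finset.disjoint_left, Finset.mem_product, mem_shapes]
    rintro p ⟨⟨-, h1⟩, -⟩ ⟨⟨-, h2⟩, -⟩
    have := mem_antidiagonal.mp hij
    have := mem_antidiagonal.mp hkl
    exact hne (Prod.ext (by omega) (by omega))
  calc 2 * symWeight (m + 2) = 2 • ∑ p ∈ shapePairs m with p.1 ≤ p.2, w p := by
        rw [symWeight, shapes_add_two, Finset.sum_image, two_nsmul, two_mul]
        rintro ⟨x, y⟩ - ⟨x', y'⟩ - h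
        simpa using h
    _ = ∑ p ∈ shapePairs m, ((2 : ℚ) ^ symBT p.1)⁻¹ * ((2 : ℚ) ^ symBT p.2)⁻¹ := by
        rw [Finset.two_nsmul_sum_filter_le hswap fun p => by
            simp only [w, Prod.fst_swap, Prod.snd_swap, symBT_node_comm p.2],
          Finset.sum_filter, ← Finset.sum_add_distrib]
        exact Finset.sum_congr rfl hdiag
    _ = _ := by
        rw [shapePairs, Finset.sum_biUnion hdisj]
        refine Finset.sum_congr rfl fun ij _ => ?_
        rw [Finset.sum_product, symWeight, symWeight, Finset.sum_mul_sum]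

theorem symWeight_succ (m : ℕ) : symWeight (m + 1) = catalan m / 2 ^ m := by
  induction m using Nat.strong_induction_on with
  | _ m ih =>
    cases m with
    | zero => simp [symWeight, shapes_one, symBT]
    | succ k =>
      have hsum : ∑ ij ∈ antidiagonal k, symWeight (ij.1 + 1) * symWeight (ij.2 + 1)
          = catalan (k + 1) / 2 ^ k := by
        rw [catalan_succ', Nat.cast_sum, Finset.sum_div]
        refine Finset.sum_congr rfl fun ij hij => ?_
        have hk := mem_antidiagonal.mp hij
        rw [ih ij.1 (by omega), ih ij.2 (by omega), ← hk, pow_add]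
        push_cast
        ring
      have h := two_mul_symWeight_add_two k
      rw [hsum] at h
      rw [pow_succ, ← div_div, ← h]
      ring

end Catalan

theorem two_pow_mul_doubleFactorial (m : ℕ) : 2 ^ m * (2 * m - 1)‼ = (m + 1)! * catalan m := by
  apply Nat.eq_of_mul_eq_mul_right m.factorial_pos
  have hfac : (2 * m)! = 2 ^ m * m ! * (2 * m - 1)‼ := by
    rcases m with _ | k
    · rfl
    rw [show 2 * (k + 1) - 1 = 2 * k + 1 by omega, ← Nat.doubleFactorial_two_mul,
      show 2 * (k + 1) = 2 * k + 1 + 1 by omega, Nat.factorial_eq_mul_doubleFactorial]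
  have hcat : (m + 1)! * catalan m * m ! = (2 * m)! := by
    calc (m + 1)! * catalan m * m ! = (2 * m).choose m * m ! * (2 * m - m)! := by
          rw [Nat.factorial_succ, show 2 * m - m = m by omega, ← Nat.centralBinom_eq_two_mul_choose,
            ← succ_mul_catalan_eq_centralBinom]
          ring
      _ = (2 * m)! := Nat.choose_mul_factorial_mul_factorial (by omega)
  rw [hcat, hfac]
  ring

theorem symWeight_succ_eq (m : ℕ) : symWeight (m + 1) = (2 * m - 1)‼ / (m + 1)! := by
  have h : (2 : ℚ) ^ m * (2 * m - 1)‼ = (m + 1)! * catalan m := by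
    exact_mod_cast two_pow_mul_doubleFactorial m
  rw [symWeight_succ, div_eq_div_iff (by positivity) (by positivity)]
  linear_combination -h

theorem doubleFac_eq_doubleFactorial : ∀ n, doubleFac n = n‼
  | 0 => rfl
  | 1 => rfl
  | n + 2 => by rw [doubleFac, Nat.doubleFactorial_add_two, doubleFac_eq_doubleFactorial n]

namespace Otter

def rep : Otter → BT := Quotient.lift BT.canon fun _ _ h => BT.canon_eq_of_iso h

theorem mk_rep (q : Otter) : (⟦q.rep⟧ : Otter) = q :=
  Quotient.inductionOn q fun t => Quotient.sound (BT.iso_canon t).symm'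

theorem canon_rep (q : Otter) : q.rep.canon = q.rep :=
  Quotient.inductionOn q BT.canon_canon

theorem leaves_rep (q : Otter) : leavesBT q.rep = q.leaves :=
  Quotient.inductionOn q fun t => (leaves_iso (BT.iso_canon t)).symm

theorem sym_rep (q : Otter) : symBT q.rep = q.sym :=
  Quotient.inductionOn q fun t => (sym_iso (BT.iso_canon t)).symm

end Otter

namespace LTree

def rep : LTree → LBT := Quotient.lift LBT.canon fun _ _ h => LBT.canon_eq_of_liso h

theorem mk_rep (q : LTree) : (⟦q.rep⟧ : LTree) = q :=
  Quotient.inductionOn q fun t => Quotient.sound (LBT.liso_canon t).symm'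

theorem canon_rep (q : LTree) : q.rep.canon = q.rep :=
  Quotient.inductionOn q LBT.canon_canon

theorem labels_rep (q : LTree) : labelsLT q.rep = q.labels :=
  Quotient.inductionOn q LBT.labels_canon

theorem shape_rep (q : LTree) : shapeLT q.rep = q.shape.rep :=
  Quotient.inductionOn q LBT.shape_canon

theorem leaves_shape (q : LTree) : q.shape.leaves = Multiset.card q.labels :=
  Quotient.inductionOn q fun t => (card_labelsLT t).symm

end LTree

def OtterN.equivShapes (n : ℕ) : OtterN n ≃ shapes n where
  toFun q := ⟨q.1.rep, mem_shapes.mpr ⟨q.1.canon_rep, q.1.leaves_rep.trans q.2⟩⟩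
  invFun s := ⟨⟦s.1⟧, (mem_shapes.mp s.2).2⟩
  left_inv q := Subtype.ext q.1.mk_rep
  right_inv s := Subtype.ext (mem_shapes.mp s.2).1

noncomputable instance (n : ℕ) : Fintype (OtterN n) :=
  Fintype.ofEquiv _ (OtterN.equivShapes n).symm

theorem OtterN.sum_eq_sum_shapes {M : Type*} [AddCommMonoid M] (n : ℕ) (f : ℕ → M) :
    ∑ q : OtterN n, f q.1.sym = ∑ s ∈ shapes n, f (symBT s) := by
  rw [← Finset.sum_coe_sort (shapes n)]
  exact Fintype.sum_equiv (OtterN.equivShapes n) _ _ fun q => by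
    rw [← Otter.sym_rep]; rfl

theorem OtterN.sum_inv_two_pow_sym (n : ℕ) :
    ∑ q : OtterN n, ((2 : ℚ) ^ q.1.sym)⁻¹ = symWeight n :=
  OtterN.sum_eq_sum_shapes n fun k => ((2 : ℚ) ^ k)⁻¹

def Phylo.shape {n : ℕ} (p : Phylo n) : OtterN n :=
  ⟨p.1.shape, by rw [LTree.leaves_shape, p.2, Finset.card_val, Nat.card_Icc, Nat.add_sub_cancel]⟩

theorem Phylo.shape_eq_shape_iff {n : ℕ} {p p' : Phylo n} :
    p.shape = p'.shape ↔ p.1.shape = p'.1.shape :=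
  Subtype.ext_iff

def Phylo.fiberShapeEquiv {n : ℕ} (q : OtterN n) :
    {p : Phylo n // p.shape = q} ≃ fiber q.1.rep (Finset.Icc 1 n) where
  toFun p := ⟨p.1.1.rep, mem_fiber.mpr ⟨p.1.1.canon_rep,
    by rw [LTree.shape_rep]; exact congrArg (fun x : OtterN n => x.1.rep) p.2,
    p.1.1.labels_rep.trans p.1.2⟩⟩
  invFun t := ⟨⟨⟦t.1⟧, (mem_fiber.mp t.2).2.2⟩, Subtype.ext <| by
    change (⟦shapeLT t.1⟧ : Otter) = q.1
    rw [(mem_fiber.mp t.2).2.1, q.1.mk_rep]⟩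
  left_inv p := Subtype.ext (Subtype.ext p.1.1.mk_rep)
  right_inv t := Subtype.ext (mem_fiber.mp t.2).1

instance {n : ℕ} (q : OtterN n) : Finite {p : Phylo n // p.shape = q} :=
  Finite.of_equiv _ (Phylo.fiberShapeEquiv q).symm

theorem Phylo.card_fiber_shape {n : ℕ} (q : OtterN n) :
    (Nat.card {p : Phylo n // p.shape = q} : ℚ) = n ! * ((2 : ℚ) ^ q.1.sym)⁻¹ := by
  have h := card_fiber_mul q.1.rep q.1.canon_rep (Finset.Icc 1 n)
    (by rw [Nat.card_Icc, q.1.leaves_rep, q.2, Nat.add_sub_cancel])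
  rw [q.1.leaves_rep, q.2, q.1.sym_rep] at h
  rw [Nat.card_congr (Phylo.fiberShapeEquiv q), Nat.card_eq_finsetCard, ← h]
  push_cast
  field_simp

theorem pIso_eq (n : ℕ) :
    pIso n = (∑ q : OtterN n, ((1 : ℚ) / 4) ^ q.1.sym) / symWeight n ^ 2 := by
  have hpairs : Nat.card {pp : Phylo n × Phylo n // pp.1.1.shape = pp.2.1.shape}
      = Nat.card {pp : Phylo n × Phylo n // pp.1.shape = pp.2.shape} :=
    Nat.card_congr (Equiv.subtypeEquivRight fun _ => Phylo.shape_eq_shape_iff.symm)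
  have hsq : ∀ k : ℕ, ((n ! : ℚ) * ((2 : ℚ) ^ k)⁻¹) ^ 2 = (n ! : ℚ) ^ 2 * ((1 : ℚ) / 4) ^ k := by
    intro k
    rw [mul_pow, ← inv_pow, ← pow_mul, mul_comm k, pow_mul]
    norm_num
  rw [pIso, hpairs, Nat.card_fiber_pairs_eq_sum_sq, Nat.card_eq_sum_card_fiber Phylo.shape,
    ← OtterN.sum_inv_two_pow_sym]
  push_cast
  simp only [Phylo.card_fiber_shape, hsq, ← Finset.mul_sum, mul_pow]
  exact mul_div_mul_left _ _ (by positivity)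

theorem pIso_formula_general (n : ℕ) :
    pIso n = ((n.factorial : ℚ) / (doubleFac (2 * n - 3) : ℚ)) ^ 2 *
      ∑ᶠ t : OtterN n, ((1 : ℚ) / 4) ^ t.1.sym := by
  rw [pIso_eq, finsum_eq_sum_of_fintype]
  rcases n with _ | m
  · rw [OtterN.sum_eq_sum_shapes 0 fun k => ((1 : ℚ) / 4) ^ k, shapes_zero]
    simp
  rw [symWeight_succ_eq, doubleFac_eq_doubleFactorial, show 2 * (m + 1) - 3 = 2 * m - 1 by omega]
  field_simp

/-- for `n ≥ 2`, the probability that two uniform random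
phylogenetic trees of size `n` are isomorphic equals
`(n!/(2n-3)!!)² · Σ_{t ∈ U_n} (1/4)^{sym t}`. -/
theorem pIso_formula (n : ℕ) (hn : 2 ≤ n) :
    pIso n = ((n.factorial : ℚ) / (doubleFac (2 * n - 3) : ℚ)) ^ 2 *
      ∑ᶠ t : OtterN n, ((1 : ℚ) / 4) ^ t.1.sym :=
  pIso_formula_general n
end

section
/- The sequence A_n = Σ_{t ∈ U_n} 2^{sym(t)}, giving the total number of automorphisms over all Otter trees with n leaves, begins A_1 = 1, A_2 = 2, A_3 = 2, A_4 = 10, A_5 = 14, A_6 = 42, A_7 = 90, A_8 = 354, and satisfies A_1 = 1 and, for n ≥ 2, A_n = (1/2) Σ_{k=1}^{n-1} A_k A_{n−k} + (3/2)·[n even]·B_{n/2}, where B_m = Σ_{t ∈ U_m} 4^{sym(t)}. -/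
/-!
Splitting a tree at its root gives the ordered pair `(l, r)` of its subtrees, and `sym` is additive
over the split except that a symmetric root adds one. Hence summing `u^{sym a} u^{sym b}` over the
ordered pairs of trees with `n` leaves in total counts every tree with an asymmetric root twice
(as `(l, r)` and `(r, l)`), with weight `u^{sym t}`, and every tree `node s s` once, with weight
`(u²)^{sym s} = u^{sym t - 1}`. Correcting for the symmetric roots gives
`2 φ_n(u) = Σ φ_k(u) φ_{n-k}(u) + (2u - 1) [n even] φ_{n/2}(u²)`,
which is the recurrence at `u = 2`.
The initial values follow from the recurrence and `φ_1 = 1`: solving it for `n ≤ 4` at a general `u`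
gives `φ_2 = φ_3 = u` and `φ_4 = u + u³`, which also supplies `B_1, …, B_4`.
-/

open scoped Classical

/-- `A_n = Σ_{t ∈ U_n} 2^{sym t}`: total number of automorphisms of Otter trees
with `n` leaves. -/
noncomputable def autSum (n : ℕ) : ℚ := ∑ᶠ t : OtterN n, (2 : ℚ) ^ t.1.sym

/-- `B_m = Σ_{t ∈ U_m} 4^{sym t}`. -/
noncomputable def autSum4 (m : ℕ) : ℚ := ∑ᶠ t : OtterN m, (4 : ℚ) ^ t.1.sym

namespace Otter

open Finset

def leaf : Otter := ⟦BT.leaf⟧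

def node : Otter → Otter → Otter :=
  Quotient.lift₂ (fun a b => ⟦BT.node a b⟧) fun _ _ _ _ h₁ h₂ =>
    Quotient.sound (Iso.node h₁ h₂)

theorem leaves_leaf : leaf.leaves = 1 := rfl

theorem sym_leaf : leaf.sym = 0 := rfl

theorem leaves_node (a b : Otter) : (node a b).leaves = a.leaves + b.leaves :=
  Quotient.inductionOn₂ a b fun _ _ => rfl

theorem sym_node (a b : Otter) : (node a b).sym = a.sym + b.sym + if a = b then 1 else 0 :=
  Quotient.inductionOn₂ a b fun x y => by
    have hxy : Iso x y ↔ (⟦x⟧ : Otter) = ⟦y⟧ :=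
      ⟨fun h => Quotient.sound h, fun h => Quotient.exact (s := btSetoid) h⟩
    exact congrArg (symBT x + symBT y + ·) (if_congr hxy rfl rfl)

theorem node_comm (a b : Otter) : node a b = node b a :=
  Quotient.inductionOn₂ a b fun x y => Quotient.sound (Iso.swap (Iso.rfl x) (Iso.rfl y))

theorem node_eq_node_iff {a b c d : Otter} :
    node a b = node c d ↔ a = c ∧ b = d ∨ a = d ∧ b = c := by
  refine ⟨fun h => ?_, ?_⟩
  · induction a, b using Quotient.inductionOn₂ with | _ x y
    induction c, d using Quotient.inductionOn₂ with | _ z w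
    cases (Quotient.exact h : Iso (.node x y) (.node z w)) with
    | node h₁ h₂ => exact .inl ⟨Quotient.sound h₁, Quotient.sound h₂⟩
    | swap h₁ h₂ => exact .inr ⟨Quotient.sound h₁, Quotient.sound h₂⟩
  · rintro (⟨rfl, rfl⟩ | ⟨rfl, rfl⟩)
    exacts [rfl, node_comm _ _]

theorem one_le_leaves (t : Otter) : 1 ≤ t.leaves := by
  induction t using Quotient.ind with | _ x
  change 1 ≤ leavesBT x
  induction x with
  | leaf => exact le_rfl
  | node l r ihl _ => exact ihl.trans (Nat.le_add_right _ _)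

theorem eq_leaf_of_leaves_eq_one {t : Otter} (h : t.leaves = 1) : t = leaf := by
  induction t using Quotient.ind with | _ x
  cases x with
  | leaf => rfl
  | node l r =>
    have h' : leaves ⟦l⟧ + leaves ⟦r⟧ = 1 := h
    have := one_le_leaves ⟦l⟧
    have := one_le_leaves ⟦r⟧
    omega

theorem exists_eq_node {t : Otter} (h : 2 ≤ t.leaves) : ∃ l r, t = node l r := by
  induction t using Quotient.ind with | _ x
  cases x with
  | leaf => exact absurd h (by decide)
  | node l r => exact ⟨⟦l⟧, ⟦r⟧, rfl⟩

theorem finite_setOf_leaves_eq (n : ℕ) : {t : Otter | t.leaves = n}.Finite := by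
  induction n using Nat.strong_induction_on with | _ n ih
  rcases lt_or_ge n 2 with hn | hn
  · refine (Set.finite_singleton leaf).subset fun t (ht : t.leaves = n) => ?_
    exact eq_leaf_of_leaves_eq_one (by have := one_le_leaves t; omega)
  · refine (Set.finite_Ico 1 n |>.biUnion fun k hk =>
      (ih k hk.2).image2 node (ih (n - k) (by have := hk.1; omega))).subset fun t ht => ?_
    obtain ⟨l, r, rfl⟩ := exists_eq_node (show 2 ≤ t.leaves from ht ▸ hn)
    have hsum : l.leaves + r.leaves = n := (leaves_node l r).symm.trans ht
    have := one_le_leaves r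
    exact Set.mem_biUnion (x := l.leaves) ⟨one_le_leaves l, by omega⟩
      ⟨l, rfl, r, show r.leaves = n - l.leaves by omega, rfl⟩

/-- `U_n`. -/
noncomputable def ofLeaves (n : ℕ) : Finset Otter := (finite_setOf_leaves_eq n).toFinset

@[simp]
theorem mem_ofLeaves {n : ℕ} {t : Otter} : t ∈ ofLeaves n ↔ t.leaves = n :=
  Set.Finite.mem_toFinset _

theorem ofLeaves_one : ofLeaves 1 = {leaf} := by
  ext t
  simp only [mem_ofLeaves, mem_singleton]
  exact ⟨eq_leaf_of_leaves_eq_one, fun h => h ▸ leaves_leaf⟩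

theorem finsum_otterN_eq_sum {M : Type*} [AddCommMonoid M] (f : Otter → M) (n : ℕ) :
    ∑ᶠ t : OtterN n, f t.1 = ∑ t ∈ ofLeaves n, f t :=
  (finsum_subtype_eq_finsum_cond (fun t : Otter => t.leaves = n)).trans
    (finsum_mem_eq_finite_toFinset_sum f (finite_setOf_leaves_eq n))

noncomputable def pairs (n : ℕ) : Finset (Otter × Otter) :=
  (Ico 1 n).biUnion fun k => ofLeaves k ×ˢ ofLeaves (n - k)

theorem mem_pairs {n : ℕ} {p : Otter × Otter} : p ∈ pairs n ↔ p.1.leaves + p.2.leaves = n := by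
  have := one_le_leaves p.1
  have := one_le_leaves p.2
  simp only [pairs, mem_biUnion, mem_Ico, mem_product, mem_ofLeaves]
  constructor
  · rintro ⟨k, hk, h₁, h₂⟩
    omega
  · intro h
    exact ⟨p.1.leaves, by omega, rfl, by omega⟩

theorem sum_pairs_mul {R : Type*} [CommSemiring R] (f : Otter → R) (n : ℕ) :
    ∑ p ∈ pairs n, f p.1 * f p.2 =
      ∑ k ∈ Ico 1 n, (∑ t ∈ ofLeaves k, f t) * ∑ t ∈ ofLeaves (n - k), f t := by
  rw [pairs, sum_biUnion]
  · simp only [sum_product, sum_mul_sum]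
  · intro k _ k' _ hkk'
    simp only [Function.onFun, disjoint_left, mem_product, mem_ofLeaves]
    rintro p ⟨hk, _⟩ ⟨hk', _⟩
    exact hkk' (hk.symm.trans hk')

theorem filter_pairs_node_eq (l r : Otter) :
    {p ∈ pairs (l.leaves + r.leaves) | node p.1 p.2 = node l r} = {(l, r), (r, l)} := by
  ext ⟨a, b⟩
  simp only [mem_filter, mem_pairs, node_eq_node_iff, mem_insert, mem_singleton, Prod.mk.injEq]
  constructor
  · exact And.right
  · rintro (⟨rfl, rfl⟩ | ⟨rfl, rfl⟩)
    exacts [⟨rfl, .inl ⟨rfl, rfl⟩⟩, ⟨add_comm _ _, .inr ⟨rfl, rfl⟩⟩]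

/-- `φ_n(u) = Σ_{t ∈ U_n} u^{sym t}`. -/
noncomputable def symSum {R : Type*} [CommSemiring R] (u : R) (n : ℕ) : R :=
  ∑ t ∈ ofLeaves n, u ^ t.sym

section Recurrence

variable {R : Type*} [CommRing R]

theorem sum_filter_pairs_node_eq (f : Otter → R) (l r : Otter) :
    ∑ p ∈ pairs (l.leaves + r.leaves) with node p.1 p.2 = node l r, f p.1 * f p.2 =
      if l = r then f l * f l else 2 * (f l * f r) := by
  rw [filter_pairs_node_eq]
  split_ifs with h
  · subst h
    simp
  · rw [sum_pair fun h' => h (congrArg Prod.fst h')]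
    ring

theorem two_mul_pow_sym_node (u : R) (l r : Otter) :
    2 * u ^ (node l r).sym =
      ∑ p ∈ pairs (l.leaves + r.leaves) with node p.1 p.2 = node l r, u ^ p.1.sym * u ^ p.2.sym
        + if l = r then (2 * u - 1) * (u ^ 2) ^ l.sym else 0 := by
  rw [sum_filter_pairs_node_eq (u ^ ·.sym), sym_node]
  split_ifs with h
  · subst h
    ring
  · ring

theorem sum_sum_node_self_eq (g : Otter → R) (n : ℕ) :
    ∑ s ∈ ofLeaves (n / 2), ∑ t ∈ ofLeaves n, (if node s s = t then g s else 0) =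
      if Even n then ∑ s ∈ ofLeaves (n / 2), g s else 0 := by
  simp_rw [sum_ite_eq, mem_ofLeaves, leaves_node]
  split_ifs with hn
  · refine sum_congr rfl fun s hs => if_pos ?_
    obtain ⟨m, rfl⟩ := hn
    rw [mem_ofLeaves.1 hs]
    omega
  · exact sum_eq_zero fun s _ => if_neg fun h => hn ⟨s.leaves, h.symm⟩

theorem two_mul_symSum (u : R) {n : ℕ} (hn : 2 ≤ n) :
    2 * symSum u n = ∑ k ∈ Ico 1 n, symSum u k * symSum u (n - k)
      + if Even n then (2 * u - 1) * symSum (u ^ 2) (n / 2) else 0 := by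
  set c : Otter → R := fun s => (2 * u - 1) * (u ^ 2) ^ s.sym
  have per_tree : ∀ t ∈ ofLeaves n, 2 * u ^ t.sym =
      ∑ p ∈ pairs n with node p.1 p.2 = t, u ^ p.1.sym * u ^ p.2.sym
        + ∑ s ∈ ofLeaves (n / 2), if node s s = t then c s else 0 := by
    intro t ht
    rw [mem_ofLeaves] at ht
    obtain ⟨l, r, rfl⟩ := exists_eq_node (ht ▸ hn)
    rw [← ht, leaves_node, two_mul_pow_sym_node]
    congr 1
    simp_rw [node_eq_node_iff, and_comm (a := _ = l), or_self]
    split_ifs with h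
    · subst h
      simp_rw [and_self, sum_ite_eq', mem_ofLeaves]
      rw [if_pos (by omega)]
    · exact (sum_eq_zero fun s _ => if_neg fun hs => h (hs.2.symm.trans hs.1)).symm
  have maps_to : ∀ p ∈ pairs n, node p.1 p.2 ∈ ofLeaves n := fun p hp => by
    rw [mem_ofLeaves, leaves_node, mem_pairs.1 hp]
  calc 2 * symSum u n
      = ∑ t ∈ ofLeaves n, 2 * u ^ t.sym := mul_sum _ _ _
    _ = ∑ p ∈ pairs n, u ^ p.1.sym * u ^ p.2.sym
          + ∑ s ∈ ofLeaves (n / 2), ∑ t ∈ ofLeaves n, if node s s = t then c s else 0 := by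
      rw [sum_congr rfl per_tree, sum_add_distrib, sum_fiberwise_of_maps_to maps_to, sum_comm]
    _ = _ := by
      rw [sum_pairs_mul (u ^ ·.sym), sum_sum_node_self_eq, ← mul_sum]
      rfl

end Recurrence

theorem symSum_one {R : Type*} [CommSemiring R] (u : R) : symSum u 1 = 1 := by
  rw [symSum, ofLeaves_one, sum_singleton, sym_leaf, pow_zero]

section SmallValues

variable {K : Type*} [Field K] [CharZero K]

theorem symSum_two (u : K) : symSum u 2 = u := by
  have h := two_mul_symSum u (le_refl 2)
  simpa [symSum_one] using h

theorem symSum_three (u : K) : symSum u 3 = u := by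
  have h := two_mul_symSum u (by norm_num : 2 ≤ 3)
  simp only [sum_Ico_eq_sum_range, Nat.add_one_sub_one, sum_range_succ, range_one, sum_singleton,
    add_zero, symSum_one, symSum_two, one_mul, Nat.reduceAdd, Nat.reduceSub, mul_one, Nat.even_iff,
    Nat.reduceMod, one_ne_zero, ↓reduceIte] at h
  linear_combination h / 2

theorem symSum_four (u : K) : symSum u 4 = u + u ^ 3 := by
  have h := two_mul_symSum u (by norm_num : 2 ≤ 4)
  simp only [sum_Ico_eq_sum_range, Nat.add_one_sub_one, sum_range_succ, range_one, sum_singleton,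
    add_zero, symSum_one, symSum_three, one_mul, Nat.reduceAdd, symSum_two, Nat.reduceSub, mul_one,
    Nat.even_iff, Nat.reduceMod, ↓reduceIte, Nat.reduceDiv] at h
  linear_combination h / 2

end SmallValues

end Otter

open Otter

theorem autSum_eq_symSum (n : ℕ) : autSum n = symSum 2 n :=
  finsum_otterN_eq_sum (2 ^ ·.sym) n

theorem autSum4_eq_symSum (n : ℕ) : autSum4 n = symSum (2 ^ 2) n := by
  rw [autSum4, finsum_otterN_eq_sum (4 ^ ·.sym)]
  norm_num [symSum]

theorem autSum_eq_half_sum_add (n : ℕ) (hn : 2 ≤ n) :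
    autSum n = (1 / 2) * ∑ k ∈ Finset.Ico 1 n, autSum k * autSum (n - k)
      + (if Even n then (3 / 2) * autSum4 (n / 2) else 0) := by
  have h := two_mul_symSum (2 : ℚ) hn
  simp only [← autSum_eq_symSum, ← autSum4_eq_symSum] at h
  split_ifs at h ⊢ <;> linear_combination h / 2

/-- initial values of `A_n` and the recurrence
`A_n = (1/2) Σ A_k A_{n−k} + (3/2)[n even] B_{n/2}`. -/
theorem autSum_values_and_recurrence :
    autSum 1 = 1 ∧ autSum 2 = 2 ∧ autSum 3 = 2 ∧ autSum 4 = 10 ∧ autSum 5 = 14 ∧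
    autSum 6 = 42 ∧ autSum 7 = 90 ∧ autSum 8 = 354 ∧
    ∀ n : ℕ, 2 ≤ n →
      autSum n = (1 / 2) * ∑ k ∈ Finset.Ico 1 n, autSum k * autSum (n - k)
        + (if Even n then (3 / 2) * autSum4 (n / 2) else 0) := by
  have h1 : autSum 1 = 1 := by rw [autSum_eq_symSum, symSum_one]
  have h2 : autSum 2 = 2 := by rw [autSum_eq_symSum, symSum_two]
  have h3 : autSum 3 = 2 := by rw [autSum_eq_symSum, symSum_three]
  have h4 : autSum 4 = 10 := by rw [autSum_eq_symSum, symSum_four]; norm_num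
  have hB3 : autSum4 3 = 4 := by rw [autSum4_eq_symSum, symSum_three]; norm_num
  have hB4 : autSum4 4 = 68 := by rw [autSum4_eq_symSum, symSum_four]; norm_num
  have h5 : autSum 5 = 14 := by
    rw [autSum_eq_half_sum_add 5 (by norm_num)]
    norm_num [Finset.sum_Ico_eq_sum_range, Finset.sum_range_succ, Nat.even_iff, h1, h2, h3, h4]
  have h6 : autSum 6 = 42 := by
    rw [autSum_eq_half_sum_add 6 (by norm_num)]
    norm_num [Finset.sum_Ico_eq_sum_range, Finset.sum_range_succ, Nat.even_iff, h1, h2, h3, h4, h5,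
      hB3]
  have h7 : autSum 7 = 90 := by
    rw [autSum_eq_half_sum_add 7 (by norm_num)]
    norm_num [Finset.sum_Ico_eq_sum_range, Finset.sum_range_succ, Nat.even_iff, h1, h2, h3, h4, h5,
      h6]
  have h8 : autSum 8 = 354 := by
    rw [autSum_eq_half_sum_add 8 (by norm_num)]
    norm_num [Finset.sum_Ico_eq_sum_range, Finset.sum_range_succ, Nat.even_iff, h1, h2, h3, h4, h5,
      h6, h7, hB4]
  exact ⟨h1, h2, h3, h4, h5, h6, h7, h8, autSum_eq_half_sum_add⟩
end
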